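/- Let r ≥ 1 and let G be a connected r-regular graph. Then G has a strong clique of size two if and only if G is isomorphic to the complete bipartite graph K_{r,r}. -/

import Mathlib

/-!
If `uv` is a strong edge, every neighbour `x` of `u` is adjacent to every neighbour `y` of `v`:
otherwise `{x, y}` extends to a maximal independent set avoiding both `u` and `v`. By
`r`-regularity this forces `N(x) = N(v)` for `x ∈ N(u)`, and symmetrically, so `N(u) ∪ N(v)` is
closed under adjacency, hence is everything by connectivity, and `G` is complete bipartite with
sides `N(u)` and `N(v)`. Conversely, in `K_{r,r}` every vertex `w` has the neighbourhood of the
endpoint of a fixed edge on its side, and that endpoint lies in every maximal independent set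
through `w`.
-/

variable {V : Type*} [Fintype V] [DecidableEq V]

/-- `S` is an independent set in `G`. -/
def IsIndep (G : SimpleGraph V) (S : Finset V) : Prop :=
  ∀ ⦃u⦄, u ∈ S → ∀ ⦃v⦄, v ∈ S → ¬ G.Adj u v

/-- `S` is a maximal independent set in `G`. -/
def MaxIndep (G : SimpleGraph V) (S : Finset V) : Prop :=
  IsIndep G S ∧ ∀ T, IsIndep G T → S ⊆ T → T = S

/-- `C` is a strong clique in `G`: a clique meeting every maximal independent set. -/
def IsStrongClique (G : SimpleGraph V) (C : Finset V) : Prop :=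
  G.IsClique ↑C ∧ ∀ S, MaxIndep G S → (C ∩ S).Nonempty

/-- `G` is localizable: its vertex set partitions into strong cliques. -/
def Localizable (G : SimpleGraph V) : Prop :=
  ∃ (k : ℕ) (C : Fin k → Finset V), (∀ j, IsStrongClique G (C j)) ∧ ∀ v, ∃! j, v ∈ C j

/-- The independence number `α(G)`. -/
noncomputable def alpha (G : SimpleGraph V) : ℕ :=
  sSup {n | ∃ S : Finset V, IsIndep G S ∧ S.card = n}

/-- The independent domination number `i(G)`. -/
noncomputable def indomNum (G : SimpleGraph V) : ℕ :=
  sInf {n | ∃ S : Finset V, MaxIndep G S ∧ S.card = n}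

/-- The clique cover number `θ(G)`. -/
noncomputable def theta (G : SimpleGraph V) : ℕ :=
  sInf {n | ∃ C : Fin n → Finset V, (∀ j, G.IsClique ↑(C j)) ∧ ∀ v, ∃! j, v ∈ C j}

/-- `G` is well-covered: all maximal independent sets have the same size. -/
def WellCovered (G : SimpleGraph V) : Prop :=
  ∀ S T, MaxIndep G S → MaxIndep G T → S.card = T.card

namespace SimpleGraph

variable {W : Type*} {G : SimpleGraph W}

theorem Preconnected.mem_of_forall_adj_mem (hG : G.Preconnected) {s : Set W}
    (hs : ∀ ⦃x y⦄, x ∈ s → G.Adj x y → y ∈ s) {a : W} (ha : a ∈ s) (b : W) : b ∈ s := by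
  obtain ⟨p⟩ := hG a b
  induction p with
  | nil => exact ha
  | cons h _ ih => exact ih (hs ha h)

def completeBipartiteGraphIsoOfAdjIff {A B : Set W} [DecidablePred (· ∈ A)]
    (hAB : ∀ x, x ∉ A ↔ x ∈ B) (hadj : ∀ x y, G.Adj x y ↔ (x ∈ A ↔ y ∈ B)) :
    completeBipartiteGraph A B ≃g G where
  toEquiv := ((Equiv.refl _).sumCongr (Equiv.subtypeEquivRight hAB).symm).trans
    (Equiv.sumCompl (· ∈ A))
  map_rel_iff' := by
    have hBA : ∀ x ∈ B, x ∉ A := fun x => (hAB x).mpr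
    rintro (⟨x, hx⟩ | ⟨x, hx⟩) (⟨y, hy⟩ | ⟨y, hy⟩) <;> simp [hadj, hx, hy, hBA, ← hAB]

end SimpleGraph

open SimpleGraph

section

variable {W : Type*} [DecidableEq W] {G : SimpleGraph W} {S C : Finset W} {u v w x y : W}

theorem isIndep_pair_of_not_adj (h : ¬ G.Adj x y) : IsIndep G {x, y} := by
  intro a ha b hb hab
  simp only [Finset.mem_insert, Finset.mem_singleton] at ha hb
  rcases ha with rfl | rfl <;> rcases hb with rfl | rfl
  exacts [G.irrefl hab, h hab, h hab.symm, G.irrefl hab]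

theorem MaxIndep.mem_of_forall_not_adj (hS : MaxIndep G S) (hw : ∀ s ∈ S, ¬ G.Adj w s) :
    w ∈ S := by
  have hind : IsIndep G (insert w S) := by
    intro a ha b hb hab
    rw [Finset.mem_insert] at ha hb
    rcases ha with rfl | ha <;> rcases hb with rfl | hb
    exacts [G.irrefl hab, hw b hb hab, hw a ha hab.symm, hS.1 ha hb hab]
  rw [← hS.2 _ hind (Finset.subset_insert w S)]
  exact Finset.mem_insert_self w S

theorem MaxIndep.nonempty [Nonempty W] (hS : MaxIndep G S) : S.Nonempty := by
  obtain ⟨w⟩ := ‹Nonempty W›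
  exact Finset.nonempty_of_ne_empty fun hS₀ => by
    simpa [hS₀] using hS.mem_of_forall_not_adj (w := w) (by simp [hS₀])

/-- Such a vertex `c` joins any maximal independent set through `w`. -/
theorem isStrongClique_of_forall_exists_adj_imp [Nonempty W] (hC : G.IsClique (C : Set W))
    (h : ∀ w, ∃ c ∈ C, ∀ s, G.Adj c s → G.Adj w s) : IsStrongClique G C := by
  refine ⟨hC, fun S hS => ?_⟩
  obtain ⟨w, hw⟩ := hS.nonempty
  obtain ⟨c, hcC, hc⟩ := h w
  exact ⟨c, Finset.mem_inter.mpr ⟨hcC, hS.mem_of_forall_not_adj fun s hs hcs =>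
    hS.1 hw hs (hc s hcs)⟩⟩

theorem isStrongClique_pair_of_iso_completeBipartiteGraph {α β : Type*}
    (φ : G ≃g completeBipartiteGraph α β) (a : α) (b : β) :
    IsStrongClique G {φ.symm (.inl a), φ.symm (.inr b)} := by
  have : Nonempty W := ⟨φ.symm (.inl a)⟩
  refine isStrongClique_of_forall_exists_adj_imp ?_ fun w => ?_
  · rw [Finset.coe_pair, isClique_pair]
    exact fun _ => φ.symm.map_adj_iff.mpr (by simp)
  · rcases hw : φ w with c | c
    · refine ⟨_, Finset.mem_insert_self _ _, fun s hs => ?_⟩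
      rw [← φ.map_adj_iff] at hs ⊢
      simp_all
    · refine ⟨_, Finset.mem_insert_of_mem (Finset.mem_singleton_self _), fun s hs => ?_⟩
      rw [← φ.map_adj_iff] at hs ⊢
      simp_all

variable [Fintype W]

theorem exists_maxIndep_superset (hS : IsIndep G S) :
    ∃ T, MaxIndep G T ∧ S ⊆ T := by
  classical
  obtain ⟨T, hT, hmax⟩ := Finset.exists_max_image
    (Finset.univ.powerset.filter fun T => IsIndep G T ∧ S ⊆ T) Finset.card ⟨S, by simp [hS]⟩
  simp only [Finset.mem_filter] at hT
  refine ⟨T, ⟨hT.2.1, fun T' hT' hsub => ?_⟩, hT.2.2⟩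
  exact (Finset.eq_of_subset_of_card_le hsub (hmax T' (by simp [hT', hT.2.2.trans hsub]))).symm

theorem IsStrongClique.exists_forall_not_adj (hC : IsStrongClique G C) (hS : IsIndep G S) :
    ∃ c ∈ C, ∀ s ∈ S, ¬ G.Adj c s := by
  obtain ⟨T, hT, hST⟩ := exists_maxIndep_superset hS
  obtain ⟨c, hc⟩ := hC.2 T hT
  rw [Finset.mem_inter] at hc
  exact ⟨c, hc.1, fun s hs => hT.1 hc.2 (hST hs)⟩

/-- Otherwise `{x, y}` is independent, yet every vertex of `{u, v}` has a neighbour in it. -/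
theorem IsStrongClique.adj_of_adj_of_adj (h : IsStrongClique G {u, v}) (hx : G.Adj u x)
    (hy : G.Adj v y) : G.Adj x y := by
  by_contra hxy
  obtain ⟨c, hc, hcS⟩ := h.exists_forall_not_adj (isIndep_pair_of_not_adj hxy)
  rcases Finset.mem_insert.mp hc with rfl | hc
  · exact hcS x (by simp) hx
  · rw [Finset.mem_singleton.mp hc] at hcS
    exact hcS y (by simp) hy

variable [DecidableRel G.Adj] {r : ℕ}

theorem IsStrongClique.neighborFinset_eq_of_adj (hreg : G.IsRegularOfDegree r)
    (h : IsStrongClique G {u, v}) (hx : G.Adj u x) :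
    G.neighborFinset x = G.neighborFinset v := by
  refine (Finset.eq_of_subset_of_card_le (fun y hy => ?_) ?_).symm
  · rw [mem_neighborFinset] at hy ⊢
    exact h.adj_of_adj_of_adj hx hy
  · rw [card_neighborFinset_eq_degree, card_neighborFinset_eq_degree, hreg x, hreg v]

theorem IsStrongClique.notMem_neighborFinset_iff (hreg : G.IsRegularOfDegree r)
    (hconn : G.Connected) (huv : G.Adj u v) (h : IsStrongClique G {u, v}) (x : W) :
    x ∉ G.neighborFinset u ↔ x ∈ G.neighborFinset v := by
  have h' : IsStrongClique G {v, u} := Finset.pair_comm u v ▸ h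
  have hcover := hconn.preconnected.mem_of_forall_adj_mem
    (s := {x | x ∈ G.neighborFinset u ∨ x ∈ G.neighborFinset v}) ?_ (Or.inl (by simpa)) x
  · refine ⟨hcover.resolve_left, fun hxv hxu => ?_⟩
    rw [mem_neighborFinset] at hxu hxv
    exact G.irrefl (h.adj_of_adj_of_adj hxu hxv)
  · rintro a b (ha | ha) hab
    · rw [mem_neighborFinset] at ha
      exact Or.inr (by rwa [← h.neighborFinset_eq_of_adj hreg ha, mem_neighborFinset])
    · rw [mem_neighborFinset] at ha
      exact Or.inl (by rwa [← h'.neighborFinset_eq_of_adj hreg ha, mem_neighborFinset])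

theorem IsStrongClique.adj_iff (hreg : G.IsRegularOfDegree r) (hconn : G.Connected)
    (huv : G.Adj u v) (h : IsStrongClique G {u, v}) (x y : W) :
    G.Adj x y ↔ (x ∈ G.neighborFinset u ↔ y ∈ G.neighborFinset v) := by
  have h' : IsStrongClique G {v, u} := Finset.pair_comm u v ▸ h
  by_cases hx : x ∈ G.neighborFinset u
  · rw [← mem_neighborFinset, h.neighborFinset_eq_of_adj hreg (by simpa using hx)]
    simp [hx]
  · have hxv := (h.notMem_neighborFinset_iff hreg hconn huv x).mp hx
    rw [← mem_neighborFinset, h'.neighborFinset_eq_of_adj hreg (by simpa using hxv),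
      ← not_iff_not, h.notMem_neighborFinset_iff hreg hconn huv]
    simp [hx]

theorem IsStrongClique.nonempty_iso_completeBipartiteGraph (hreg : G.IsRegularOfDegree r)
    (hconn : G.Connected) (huv : G.Adj u v) (h : IsStrongClique G {u, v}) :
    Nonempty (G ≃g completeBipartiteGraph (Fin r) (Fin r)) := by
  let A : Set W := G.neighborFinset u
  let B : Set W := G.neighborFinset v
  let e : completeBipartiteGraph A B ≃g G := completeBipartiteGraphIsoOfAdjIff
    (h.notMem_neighborFinset_iff hreg hconn huv) (h.adj_iff hreg hconn huv)
  exact ⟨e.symm.trans <| completeBipartiteGraphCongr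
    ((G.neighborFinset u).equivFinOfCardEq (hreg u))
    ((G.neighborFinset v).equivFinOfCardEq (hreg v))⟩

end

theorem strong_edge_in_regular_iff_completeBipartite (G : SimpleGraph V) [DecidableRel G.Adj] (r : ℕ)
    (hr : 1 ≤ r) (hconn : G.Connected) (hreg : G.IsRegularOfDegree r) :
    (∃ u v : V, u ≠ v ∧ IsStrongClique G {u, v}) ↔
      Nonempty (G ≃g completeBipartiteGraph (Fin r) (Fin r)) := by
  constructor
  · rintro ⟨u, v, huv, h⟩
    exact h.nonempty_iso_completeBipartiteGraph hreg hconn (h.1 (by simp) (by simp) huv)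
  · rintro ⟨φ⟩
    let z : Fin r := ⟨0, hr⟩
    exact ⟨_, _, by simp, isStrongClique_pair_of_iso_completeBipartiteGraph φ z z⟩
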